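/- arXiv:2306.06698 — 2 statements merged into one kernel-verified Lean document; each statement's English description precedes it below -/
import Mathlib

section
/- Let Θ be a parameter space, Ω a measurable space, and P : Θ → Measure(Ω) a family of probability measures. Let k be a positive natural number, α ∈ [0,1], and for each j ∈ {1, ..., k} let Θ_j ⊆ Θ and let R_j ⊆ Ω be a measurable rejection region such that the test of H_{0j}: θ ∈ Θ_j is level α, i.e., P_θ(R_j) ≤ α for all θ ∈ Θ_j. Suppose that for some i ∈ {1, ..., k} there exists a sequence of parameters (θ_l)_{l ≥ 1} with θ_l ∈ Θ_i for all l, such that (1) lim_{l→∞} P_{θ_l}(R_i) = α, and (2) for each j ≠ i, lim_{l→∞} P_{θ_l}(R_j) = 1. Then the intersection-union test with rejection region R = ⋂_{j=1}^k R_j has size exactly α for testing H_0: θ ∈ ⋃_{j=1}^k Θ_j; that is, sup_{θ ∈ ⋃_{j=1}^k Θ_j} P_θ(⋂_{j=1}^k R_j) = α. -/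
open MeasureTheory Filter
open scoped ENNReal Topology

/-- Sufficient conditions for an intersection-union test to have size exactly `α`:
if each individual test of `H₀ⱼ : θ ∈ Θs j` with rejection region `R j` is level `α`, and
for some `i` there is a sequence `θseq` of parameters in `Θs i` along which the rejection
probability of `R i` tends to `α` while the rejection probability of every other `R j`
tends to `1`, then the IUT with rejection region `⋂ j, R j` has size exactly `α` for
testing `H₀ : θ ∈ ⋃ j, Θs j`. -/
theorem IUT_size
    {Θ : Type*} {Ω : Type*} [MeasurableSpace Ω]
    (P : Θ → Measure Ω) (hP : ∀ θ, IsProbabilityMeasure (P θ))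
    (k : ℕ) (hk : 0 < k) (α : ℝ≥0∞) (hα : α ≤ 1)
    (Θs : Fin k → Set Θ) (R : Fin k → Set Ω) (hR : ∀ j, MeasurableSet (R j))
    (hlevel : ∀ j, ∀ θ ∈ Θs j, P θ (R j) ≤ α)
    (i : Fin k) (θseq : ℕ → Θ) (hmem : ∀ l, θseq l ∈ Θs i)
    (h1 : Tendsto (fun l => P (θseq l) (R i)) atTop (𝓝 α))
    (h2 : ∀ j, j ≠ i → Tendsto (fun l => P (θseq l) (R j)) atTop (𝓝 1)) :
    (⨆ θ ∈ ⋃ j, Θs j, P θ (⋂ j, R j)) = α := by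
  have := hP
  apply le_antisymm
  · refine iSup₂_le fun θ hθ => ?_
    obtain ⟨j, hj⟩ := Set.mem_iUnion.mp hθ
    exact le_trans (measure_mono (Set.iInter_subset R j)) (hlevel j θ hj)
  · -- lower bound via the sequence
    have key : ∀ l, 1 - ∑ j, (1 - P (θseq l) (R j)) ≤ P (θseq l) (⋂ j, R j) := by
      intro l
      have := hP (θseq l)
      rw [tsub_le_iff_right]
      have hcompl : P (θseq l) (⋂ j, R j)ᶜ ≤ ∑ j, (1 - P (θseq l) (R j)) := by
        calc P (θseq l) (⋂ j, R j)ᶜ = P (θseq l) (⋃ j, (R j)ᶜ) := by rw [Set.compl_iInter]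
        _ ≤ ∑ j, P (θseq l) (R j)ᶜ := measure_iUnion_fintype_le _ _
        _ = ∑ j, (1 - P (θseq l) (R j)) := by
            refine Finset.sum_congr rfl fun j _ => ?_
            rw [measure_compl (hR j) (measure_ne_top _ _)]
            simp
      calc (1 : ℝ≥0∞) = P (θseq l) (⋂ j, R j) + P (θseq l) (⋂ j, R j)ᶜ := by
            rw [measure_add_measure_compl (MeasurableSet.iInter fun j => hR j)]; simp
        _ ≤ P (θseq l) (⋂ j, R j) + ∑ j, (1 - P (θseq l) (R j)) := add_le_add le_rfl hcompl
    have hsum : Tendsto (fun l => ∑ j, (1 - P (θseq l) (R j))) atTop (𝓝 (1 - α)) := by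
      have : (1 - α) = ∑ j : Fin k, if j = i then 1 - α else 0 := by simp
      rw [this]
      refine tendsto_finset_sum _ fun j _ => ?_
      by_cases hj : j = i
      · subst hj
        simp only [if_pos rfl]
        exact ENNReal.Tendsto.sub tendsto_const_nhds h1 (Or.inl ENNReal.one_ne_top)
      · simp only [if_neg hj]
        have : (0 : ℝ≥0∞) = 1 - 1 := by simp
        rw [this]
        exact ENNReal.Tendsto.sub tendsto_const_nhds (h2 j hj) (Or.inl ENNReal.one_ne_top)
    have hlow : Tendsto (fun l => 1 - ∑ j, (1 - P (θseq l) (R j))) atTop (𝓝 α) := by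
      have : α = 1 - (1 - α) := (ENNReal.sub_sub_cancel ENNReal.one_ne_top hα).symm
      rw [this]
      exact ENNReal.Tendsto.sub tendsto_const_nhds hsum (Or.inl ENNReal.one_ne_top)
    refine le_of_tendsto hlow (Eventually.of_forall fun l => ?_)
    refine le_trans (key l) ?_
    exact le_iSup₂ (f := fun θ _ => P θ (⋂ j, R j)) (θseq l)
      (Set.mem_iUnion.mpr ⟨i, hmem l⟩)
end

section
/- Let (Ω, P) be a probability space, α ∈ [0,1], and δ a real number (the true mean difference μ_T − μ_R). Let D : Ω → ℝ be a random variable (the estimator X̄_T − X̄_R) and H : Ω → ℝ a nonnegative random variable (the half-width t_{1−α,r}·σ̂), and assume the one-sided coverage identities P({ω : D(ω) − δ ≥ −H(ω)}) = 1 − α and P({ω : D(ω) − δ ≤ H(ω)}) = 1 − α, with the relevant sets measurable. Define the interval endpoints L(ω) = min{0, D(ω) − H(ω)} and U(ω) = max{0, D(ω) + H(ω)}. Then: (1) if δ ≠ 0, the coverage probability P({ω : L(ω) ≤ δ and δ ≤ U(ω)}) equals 1 − α; (2) if δ = 0, the coverage probability P({ω : L(ω) ≤ δ and δ ≤ U(ω)})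 equals 1. -/
open MeasureTheory

/-- Coverage of the `100(1-α)%` confidence interval associated with a size-`α` TOST:
if `D` is the estimator, `H ≥ 0` the half-width, `δ` the true parameter, and the one-sided
coverage identities `P(D - δ ≥ -H) = 1 - α` and `P(D - δ ≤ H) = 1 - α` hold, then the
interval `[min 0 (D - H), max 0 (D + H)]` has coverage probability `1 - α` when `δ ≠ 0`
and coverage probability `1` when `δ = 0`. -/
theorem coverage_TOST_confidence_interval
    {Ω : Type*} [MeasurableSpace Ω] (P : Measure Ω) [IsProbabilityMeasure P]
    (α : ℝ) (hα : α ∈ Set.Icc (0 : ℝ) 1) (δ : ℝ)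
    (D H : Ω → ℝ) (hD : Measurable D) (hH : Measurable H) (hHnonneg : ∀ ω, 0 ≤ H ω)
    (hlow : (P {ω | D ω - δ ≥ -H ω}).toReal = 1 - α)
    (hup : (P {ω | D ω - δ ≤ H ω}).toReal = 1 - α) :
    (δ ≠ 0 →
      (P {ω | min 0 (D ω - H ω) ≤ δ ∧ δ ≤ max 0 (D ω + H ω)}).toReal = 1 - α) ∧
    (δ = 0 →
      (P {ω | min 0 (D ω - H ω) ≤ δ ∧ δ ≤ max 0 (D ω + H ω)}).toReal = 1) := by
  constructor
  · intro hδ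
    rcases lt_or_gt_of_ne hδ with hneg | hpos
    · have hset : {ω | min 0 (D ω - H ω) ≤ δ ∧ δ ≤ max 0 (D ω + H ω)}
          = {ω | D ω - δ ≤ H ω} := by
        ext ω
        simp only [Set.mem_setOf_eq, min_le_iff, le_max_iff]
        constructor
        · rintro ⟨h1 | h1, _⟩ <;> linarith
        · intro h
          exact ⟨Or.inr (by linarith), Or.inl (by linarith)⟩
      rw [hset, hup]
    · have hset : {ω | min 0 (D ω - H ω) ≤ δ ∧ δ ≤ max 0 (D ω + H ω)}
          = {ω | D ω - δ ≥ -H ω} := by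
        ext ω
        simp only [Set.mem_setOf_eq, min_le_iff, le_max_iff]
        constructor
        · rintro ⟨_, h2 | h2⟩ <;> linarith
        · intro h
          exact ⟨Or.inl (by linarith), Or.inr (by linarith)⟩
      rw [hset, hlow]
  · intro hδ
    subst hδ
    have hset : {ω | min 0 (D ω - H ω) ≤ (0:ℝ) ∧ (0:ℝ) ≤ max 0 (D ω + H ω)}
        = Set.univ := by
      ext ω
      simp [min_le_iff, le_max_iff]
    rw [hset, measure_univ, ENNReal.toReal_one]
end
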